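/- arXiv:2008.13300 — 6 statements merged into one kernel-verified Lean document; each statement's English description precedes it below -/
import Mathlib

section
/- Let N be prime, δ > 0, and suppose M = K/(1−δ) symbols are received in total from s ≥ 1 stream objects with independently, uniformly chosen SOPIs, with M² ≤ 2N. Let Y be the number of distinct symbol IDs among the M received symbols. Then Pr[Y < K] ≤ 1/(δ²·N). -/
/-!
Symbols of one stream sit at distinct positions and the SOPI step `B` is nonzero, so they get
distinct IDs. Hence `Y ≥ M - X`, where `X` counts the colliding pairs of symbols from different
streams, and `Y < K = (1 - δ) M` forces `X > δ M`.

A cross-stream collision is an affine equation that determines the offset `A` of one stream once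
everything else is fixed, so it has probability `1/N`. Two distinct collisions have probability at
most `1/(N(N-1))`: either they determine the offsets of two streams, or they involve the same two
streams, and then their difference determines one step `B` among `N - 1` nonzero values. For the
number `m ≤ M²/2 ≤ N` of cross-stream pairs this gives
`E[X²] ≤ m/N + m(m-1)/(N(N-1)) ≤ 2m/N ≤ M²/N`, and Markov's inequality for `X²` gives
`Pr[X > δ M] ≤ 1/(δ² N)`.
-/

open Finset Function

/-- Counting form of "an event that pins down a coordinate which can be re-chosen freely in `T`
has probability at most `1 / #T`"; the coordinate is given by a lawful lens `get`/`set`. -/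
theorem Finset.card_filter_mul_card_le_of_lens {α γ : Type*} (get : α → γ) (set : α → γ → α)
    (get_set : ∀ a c, get (set a c) = c) (set_get : ∀ a, set a (get a) = a)
    (set_set : ∀ a c c', set (set a c) c' = set a c') {W : Finset α} {T : Finset γ}
    (hW : ∀ a ∈ W, ∀ c ∈ T, set a c ∈ W) (p : α → Prop) [DecidablePred p]
    (hp : ∀ a c c', p (set a c) → p (set a c') → c = c') :
    #(W.filter p) * #T ≤ #W := by
  rw [← card_product]
  refine card_le_card_of_injOn (fun x => set x.1 x.2) (fun x hx => ?_) ?_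
  · simp only [coe_product, Set.mem_prod, mem_coe, mem_filter] at hx
    exact hW _ hx.1.1 _ hx.2
  · rintro ⟨a, c⟩ ha ⟨a', c'⟩ ha' h
    simp only [coe_product, Set.mem_prod, mem_coe, mem_filter] at ha ha' h
    have hc : c = c' := by simpa only [get_set] using congrArg get h
    have hfiber : ∀ x, set a x = set a' x := fun x => by
      rw [← set_set a c, ← set_set a' c', h]
    have hpa : p (set a' (get a)) := by rw [← hfiber, set_get]; exact ha.1.2
    have hpa' : p (set a' (get a')) := by rw [set_get]; exact ha'.1.2
    have ha : a = a' := by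
      rw [← set_get a, hfiber, hp a' _ _ hpa hpa', set_get]
    simp [ha, hc]

theorem Finset.card_filter_mul_card_le_of_unique_fst {ι β γ : Type*} [DecidableEq ι]
    {W : Finset (ι → β × γ)} {T : Finset β} (t : ι)
    (hW : ∀ P ∈ W, ∀ b ∈ T, update P t (b, (P t).2) ∈ W) (p : (ι → β × γ) → Prop)
    [DecidablePred p]
    (hp : ∀ P b b', p (update P t (b, (P t).2)) → p (update P t (b', (P t).2)) → b = b') :
    #(W.filter p) * #T ≤ #W :=
  card_filter_mul_card_le_of_lens (fun P => (P t).1) (fun P b => update P t (b, (P t).2))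
    (by simp) (by simp) (by simp) hW p (fun P b b' => by simpa using hp P b b')

theorem Finset.card_filter_mul_card_le_of_unique_snd {ι β γ : Type*} [DecidableEq ι]
    {W : Finset (ι → β × γ)} {T : Finset γ} (t : ι)
    (hW : ∀ P ∈ W, ∀ c ∈ T, update P t ((P t).1, c) ∈ W) (p : (ι → β × γ) → Prop)
    [DecidablePred p]
    (hp : ∀ P c c', p (update P t ((P t).1, c)) → p (update P t ((P t).1, c')) → c = c') :
    #(W.filter p) * #T ≤ #W :=
  card_filter_mul_card_le_of_lens (fun P => (P t).2) (fun P c => update P t ((P t).1, c))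
    (by simp) (by simp) (by simp) hW p (fun P c c' => by simpa using hp P c c')

theorem Fintype.card_le_card_image_add_card_filter_lt {α β : Type*} [Fintype α]
    [LinearOrder α] [DecidableEq β] (g : α → β) :
    Fintype.card α ≤
      #(univ.image g) + #(univ.filter fun e : α × α => e.1 < e.2 ∧ g e.1 = g e.2) := by
  have hfirst : #(univ.filter fun a => ∀ b, g b = g a → a ≤ b) ≤ #(univ.image g) :=
    card_le_card_of_injOn g (fun a _ => by simp) fun a ha b hb hab =>
      le_antisymm ((mem_filter.1 ha).2 b hab.symm) ((mem_filter.1 hb).2 a hab)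
  have hrest : #(univ.filter fun a => ¬∀ b, g b = g a → a ≤ b) ≤
      #(univ.filter fun e : α × α => e.1 < e.2 ∧ g e.1 = g e.2) := by
    refine (card_le_card fun a ha => ?_).trans (card_image_le (f := Prod.snd))
    obtain ⟨b, hb, hab⟩ : ∃ b, g b = g a ∧ b < a := by simpa using ha
    exact mem_image.2 ⟨(b, a), by simp [hab, hb], rfl⟩
  rw [← card_univ, ← card_filter_add_card_filter_not (fun a => ∀ b, g b = g a → a ≤ b)]
  omega

theorem Finset.sum_card_filter_sq {α ε : Type*} (Ω : Finset α) (E : Finset ε)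
    (C : α → ε → Prop) [∀ a, DecidablePred (C a)] :
    ∑ a ∈ Ω, #(E.filter (C a)) ^ 2 =
      ∑ e ∈ E, ∑ e' ∈ E, #(Ω.filter fun a => C a e ∧ C a e') := by
  simp only [card_filter, sq, sum_mul_sum, ite_zero_mul_ite_zero, mul_one]
  rw [sum_comm]
  exact sum_congr rfl fun e _ => sum_comm

theorem Finset.sum_sum_le_of_diag_offDiag {ε : Type*} [DecidableEq ε] (E : Finset ε)
    (w : ε → ε → ℝ) {a b : ℝ} (hdiag : ∀ e ∈ E, w e e ≤ a)
    (hoff : ∀ e ∈ E, ∀ e' ∈ E, e ≠ e' → w e e' ≤ b) :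
    ∑ e ∈ E, ∑ e' ∈ E, w e e' ≤ #E * a + #E * (#E - 1) * b := by
  have hrow : ∀ e ∈ E, ∑ e' ∈ E, w e e' ≤ a + (#E - 1) * b := fun e he => by
    rw [← add_sum_erase E _ he]
    have hrest := sum_le_card_nsmul (E.erase e) (w e) b fun e' he' =>
      hoff e he e' (mem_of_mem_erase he') (ne_of_mem_erase he').symm
    rw [nsmul_eq_mul, card_erase_of_mem he, Nat.cast_pred (card_pos.2 ⟨e, he⟩)] at hrest
    linarith [hdiag e he]
  calc ∑ e ∈ E, ∑ e' ∈ E, w e e' ≤ #E • (a + (#E - 1) * b) :=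
        sum_le_card_nsmul _ _ _ hrow
    _ = #E * a + #E * (#E - 1) * b := by rw [nsmul_eq_mul]; ring

theorem Finset.card_filter_lt_mul_sq_le_sum_sq {α : Type*} (s : Finset α) (g : α → ℝ) {a : ℝ}
    (ha : 0 ≤ a) : #(s.filter fun x => a < g x) * a ^ 2 ≤ ∑ x ∈ s, g x ^ 2 := by
  rw [← nsmul_eq_mul]
  refine (card_nsmul_le_sum _ _ _ fun x hx => ?_).trans
    (sum_le_sum_of_subset_of_nonneg (filter_subset _ _) fun _ _ _ => sq_nonneg _)
  exact pow_le_pow_left₀ ha (mem_filter.1 hx).2.le 2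

namespace Sopi

section CrossPairs

variable {ι F κ : Type*} [DecidableEq ι] [Fintype κ] [LinearOrder κ] (f : κ → ι × F)

def crossPairs : Finset (κ × κ) := univ.filter fun e => e.1 < e.2 ∧ (f e.1).1 ≠ (f e.2).1

theorem card_crossPairs_mul_two_le : #(crossPairs f) * 2 ≤ Fintype.card κ ^ 2 := by
  have hsub : crossPairs f ⊆ (univ ×ˢ univ).filter fun e : κ × κ => e.1 < e.2 :=
    fun e he => by simp only [crossPairs, mem_filter] at he; simp [he.2.1]
  calc #(crossPairs f) * 2 ≤ (Fintype.card κ).choose 2 * 2 := by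
        rw [← card_univ, ← card_product_filter_lt]; gcongr
    _ ≤ Fintype.card κ * (Fintype.card κ - 1) := by
        rw [Nat.choose_two_right]; exact Nat.div_mul_le_self _ _
    _ ≤ Fintype.card κ ^ 2 := by rw [sq]; gcongr; exact Nat.sub_le _ _

variable {f}

theorem sym2_ne_of_mem_crossPairs (hf : Injective f) {e e' : κ × κ} (he : e ∈ crossPairs f)
    (he' : e' ∈ crossPairs f) (hne : e ≠ e') : s(f e.1, f e.2) ≠ s(f e'.1, f e'.2) := by
  simp only [crossPairs, mem_filter, mem_univ, true_and] at he he'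
  rw [Ne, Sym2.eq_iff, hf.eq_iff, hf.eq_iff, hf.eq_iff, hf.eq_iff]
  rintro (⟨h₁, h₂⟩ | ⟨h₁, h₂⟩)
  · exact hne (Prod.ext h₁ h₂)
  · have h := he.1
    rw [h₁, h₂] at h
    exact lt_asymm h he'.1

end CrossPairs

variable {ι F : Type*} [Field F]

/-- The ID `A + p B` of the symbol at position `p` of stream `t`, for `x = (t, p)` and
`P t = (A, B)`. -/
def symbolId (P : ι → F × F) (x : ι × F) : F := (P x.1).1 + x.2 * (P x.1).2

theorem symbolId_ne_of_fst_eq {P : ι → F × F} {x y : ι × F} (hxy : x ≠ y) (h : x.1 = y.1)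
    (hB : (P y.1).2 ≠ 0) : symbolId P x ≠ symbolId P y := by
  intro hid
  have : (x.2 - y.2) * (P y.1).2 = 0 := by
    simp only [symbolId, h] at hid
    linear_combination hid
  rcases mul_eq_zero.1 this with hp | hB'
  · exact hxy (Prod.ext h (sub_eq_zero.1 hp))
  · exact hB hB'

variable [DecidableEq ι]

theorem symbolId_update_of_ne {P : ι → F × F} {t : ι} {x : ι × F} (v : F × F) (h : x.1 ≠ t) :
    symbolId (update P t v) x = symbolId P x := by
  simp [symbolId, update_of_ne h]

theorem symbolId_update_self (P : ι → F × F) (v : F × F) (x : ι × F) :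
    symbolId (update P x.1 v) x = v.1 + x.2 * v.2 := by
  simp [symbolId]

variable [Fintype F] [DecidableEq F]

local notation "q" => Fintype.card F

theorem card_filter_symbolId_eq_mul_le_of_update_mem {W : Finset (ι → F × F)} {x y : ι × F}
    (hxy : x.1 ≠ y.1) (hW : ∀ P ∈ W, ∀ a, update P y.1 (a, (P y.1).2) ∈ W) :
    #(W.filter fun P => symbolId P x = symbolId P y) * q ≤ #W := by
  refine card_filter_mul_card_le_of_unique_fst (T := univ) y.1 (fun P hP a _ => hW P hP a) _
    fun P a a' h h' => ?_
  simp only [symbolId_update_of_ne _ hxy, symbolId_update_self] at h h'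
  linear_combination h' - h

variable [Fintype ι]

variable (ι F) in
def sopiSpace : Finset (ι → F × F) := univ.filter fun P => ∀ t, (P t).2 ≠ 0

theorem mem_sopiSpace {P : ι → F × F} : P ∈ sopiSpace ι F ↔ ∀ t, (P t).2 ≠ 0 := by
  simp [sopiSpace]

theorem update_fst_mem_sopiSpace {P : ι → F × F} (hP : P ∈ sopiSpace ι F) (t : ι) (a : F) :
    update P t (a, (P t).2) ∈ sopiSpace ι F := by
  rw [mem_sopiSpace] at hP ⊢
  intro v
  rcases eq_or_ne v t with rfl | hv <;> simp [update_of_ne, *]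

theorem card_filter_symbolId_eq_mul_le {x y : ι × F} (hxy : x.1 ≠ y.1) :
    #((sopiSpace ι F).filter fun P => symbolId P x = symbolId P y) * q ≤ #(sopiSpace ι F) :=
  card_filter_symbolId_eq_mul_le_of_update_mem hxy fun _ hP a =>
    update_fst_mem_sopiSpace hP _ a

theorem card_filter_mul_snd_eq_mul_le {t u : ι} (htu : t ≠ u) {c : F} (hc : c ≠ 0) (d : F) :
    #((sopiSpace ι F).filter fun P => c * (P t).2 = d * (P u).2) * (q - 1) ≤
      #(sopiSpace ι F) := by
  rw [← card_univ, ← card_erase_of_mem (mem_univ 0)]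
  refine card_filter_mul_card_le_of_unique_snd t (fun P hP b hb => ?_) _ fun P b b' h h' => ?_
  · rw [mem_sopiSpace] at hP ⊢
    intro v
    rcases eq_or_ne v t with rfl | hv
    · simpa using ne_of_mem_erase hb
    · simpa [update_of_ne hv] using hP v
  · simp only [update_self, update_of_ne htu.symm] at h h'
    exact mul_left_cancel₀ hc (h.trans h'.symm)

theorem card_filter_symbolId_eq_and_eq_mul_le_of_fresh {x₁ x₂ y₁ y₂ : ι × F}
    (hx : x₁.1 ≠ x₂.1) (hy : y₁.1 ≠ y₂.1) (h₁ : x₁.1 ≠ y₂.1) (h₂ : x₂.1 ≠ y₂.1) :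
    #((sopiSpace ι F).filter fun P =>
        symbolId P x₁ = symbolId P x₂ ∧ symbolId P y₁ = symbolId P y₂) * (q * q) ≤
      #(sopiSpace ι F) := by
  rw [← filter_filter, ← mul_assoc]
  refine (Nat.mul_le_mul_right _ (card_filter_symbolId_eq_mul_le_of_update_mem hy
    fun P hP a => ?_)).trans (card_filter_symbolId_eq_mul_le hx)
  rw [mem_filter] at hP ⊢
  rw [symbolId_update_of_ne _ h₁, symbolId_update_of_ne _ h₂]
  exact ⟨update_fst_mem_sopiSpace hP.1 _ a, hP.2⟩

theorem card_filter_symbolId_eq_and_eq_mul_le_of_same_streams {t₁ t₂ : ι} (ht : t₁ ≠ t₂)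
    {p₁ p₂ r₁ r₂ : F} (hpr : (p₁, p₂) ≠ (r₁, r₂)) :
    #((sopiSpace ι F).filter fun P =>
        symbolId P (t₁, p₁) = symbolId P (t₂, p₂) ∧ symbolId P (t₁, r₁) = symbolId P (t₂, r₂)) *
        (q * (q - 1)) ≤ #(sopiSpace ι F) := by
  -- The difference of the two collisions is an equation between the steps alone.
  set W := (sopiSpace ι F).filter fun P => (p₁ - r₁) * (P t₁).2 = (p₂ - r₂) * (P t₂).2
  have hsub : ((sopiSpace ι F).filter fun P =>
        symbolId P (t₁, p₁) = symbolId P (t₂, p₂) ∧ symbolId P (t₁, r₁) = symbolId P (t₂, r₂)) ⊆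
      W.filter fun P => symbolId P (t₁, p₁) = symbolId P (t₂, p₂) := by
    intro P hP
    simp only [W, mem_filter] at hP ⊢
    refine ⟨⟨hP.1, ?_⟩, hP.2.1⟩
    simp only [symbolId] at hP
    linear_combination hP.2.1 - hP.2.2
  have hA : #(W.filter fun P => symbolId P (t₁, p₁) = symbolId P (t₂, p₂)) * q ≤ #W := by
    refine card_filter_symbolId_eq_mul_le_of_update_mem ht fun P hP a => ?_
    simp only [W, mem_filter] at hP ⊢
    simpa [update_of_ne ht, update_fst_mem_sopiSpace hP.1] using hP.2
  have hB : #W * (q - 1) ≤ #(sopiSpace ι F) := by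
    by_cases hp₂ : p₂ = r₂
    · exact card_filter_mul_snd_eq_mul_le ht
        (sub_ne_zero.2 fun hp₁ => hpr (Prod.ext hp₁ hp₂)) _
    · simp only [W, eq_comm (a := (p₁ - r₁) * _)]
      exact card_filter_mul_snd_eq_mul_le ht.symm (sub_ne_zero.2 hp₂) _
  calc _ ≤ #(W.filter fun P => symbolId P (t₁, p₁) = symbolId P (t₂, p₂)) * q * (q - 1) := by
        rw [← mul_assoc]; gcongr
    _ ≤ #W * (q - 1) := by gcongr
    _ ≤ _ := hB

theorem card_filter_symbolId_eq_and_eq_mul_le {x₁ x₂ y₁ y₂ : ι × F} (hx : x₁.1 ≠ x₂.1)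
    (hy : y₁.1 ≠ y₂.1) (hxy : s(x₁, x₂) ≠ s(y₁, y₂)) :
    #((sopiSpace ι F).filter fun P =>
        symbolId P x₁ = symbolId P x₂ ∧ symbolId P y₁ = symbolId P y₂) * (q * (q - 1)) ≤
      #(sopiSpace ι F) := by
  have hswap : ∀ z₁ z₂ : ι × F, ((sopiSpace ι F).filter fun P =>
        symbolId P x₁ = symbolId P x₂ ∧ symbolId P z₁ = symbolId P z₂) =
      ((sopiSpace ι F).filter fun P =>
        symbolId P x₁ = symbolId P x₂ ∧ symbolId P z₂ = symbolId P z₁) :=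
    fun _ _ => filter_congr fun _ _ => and_congr_right' eq_comm
  have hq : q * (q - 1) ≤ q * q := Nat.mul_le_mul_left _ (Nat.sub_le _ _)
  by_cases h₂ : x₁.1 ≠ y₂.1 ∧ x₂.1 ≠ y₂.1
  · exact (Nat.mul_le_mul_left _ hq).trans
      (card_filter_symbolId_eq_and_eq_mul_le_of_fresh hx hy h₂.1 h₂.2)
  by_cases h₁ : x₁.1 ≠ y₁.1 ∧ x₂.1 ≠ y₁.1
  · rw [hswap]
    exact (Nat.mul_le_mul_left _ hq).trans
      (card_filter_symbolId_eq_and_eq_mul_le_of_fresh hx hy.symm h₁.1 h₁.2)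
  obtain ⟨t₁, p₁⟩ := x₁
  obtain ⟨t₂, p₂⟩ := x₂
  obtain ⟨t₃, p₃⟩ := y₁
  obtain ⟨t₄, p₄⟩ := y₂
  obtain ⟨rfl, rfl⟩ | ⟨rfl, rfl⟩ : t₃ = t₁ ∧ t₄ = t₂ ∨ t₃ = t₂ ∧ t₄ = t₁ := by grind
  · refine card_filter_symbolId_eq_and_eq_mul_le_of_same_streams hx fun h => hxy ?_
    simp_all
  · rw [hswap]
    refine card_filter_symbolId_eq_and_eq_mul_le_of_same_streams hx fun h => hxy ?_
    simp_all [Sym2.eq_swap]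

variable {κ : Type*} [Fintype κ] [LinearOrder κ] {f : κ → ι × F}

variable (f) in
def collisionCount (P : ι → F × F) : ℕ :=
  #((crossPairs f).filter fun e => symbolId P (f e.1) = symbolId P (f e.2))

theorem card_le_card_image_add_collisionCount (hf : Injective f) {P : ι → F × F}
    (hP : P ∈ sopiSpace ι F) :
    Fintype.card κ ≤ #(univ.image fun k => symbolId P (f k)) + collisionCount f P := by
  refine (Fintype.card_le_card_image_add_card_filter_lt fun k => symbolId P (f k)).trans_eq ?_
  rw [collisionCount, crossPairs, filter_filter]
  congr 2
  refine filter_congr fun e _ => ⟨fun ⟨hlt, hid⟩ => ⟨⟨hlt, fun hst => ?_⟩, hid⟩,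
    fun ⟨⟨hlt, _⟩, hid⟩ => ⟨hlt, hid⟩⟩
  exact symbolId_ne_of_fst_eq (hf.ne hlt.ne) hst (mem_sopiSpace.1 hP _) hid

theorem sum_collisionCount_sq_le (hf : Injective f) (hm : #(crossPairs f) ≤ q) :
    ∑ P ∈ sopiSpace ι F, (collisionCount f P : ℝ) ^ 2 ≤
      2 * #(crossPairs f) * #(sopiSpace ι F) / q := by
  have hq : (1 : ℝ) < q := by exact_mod_cast Fintype.one_lt_card
  have hdiag : ∀ e ∈ crossPairs f, (#((sopiSpace ι F).filter fun P =>
      symbolId P (f e.1) = symbolId P (f e.2) ∧ symbolId P (f e.1) = symbolId P (f e.2)) : ℝ) ≤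
        #(sopiSpace ι F) / q := fun e he => by
    rw [le_div_iff₀ (by positivity)]
    simp only [and_self]
    exact_mod_cast card_filter_symbolId_eq_mul_le (mem_filter.1 he).2.2
  have hoff : ∀ e ∈ crossPairs f, ∀ e' ∈ crossPairs f, e ≠ e' →
      (#((sopiSpace ι F).filter fun P =>
        symbolId P (f e.1) = symbolId P (f e.2) ∧ symbolId P (f e'.1) = symbolId P (f e'.2)) : ℝ) ≤
        #(sopiSpace ι F) / (q * (q - 1)) := fun e he e' he' hne => by
    rw [le_div_iff₀ (by nlinarith)]
    have := card_filter_symbolId_eq_and_eq_mul_le (mem_filter.1 he).2.2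
      (mem_filter.1 he').2.2 (sym2_ne_of_mem_crossPairs hf he he' hne)
    rw [← Nat.cast_le (α := ℝ)] at this
    push_cast [Nat.cast_sub Fintype.card_pos] at this
    exact this
  have hmoment := congrArg (Nat.cast (R := ℝ)) (sum_card_filter_sq (sopiSpace ι F) (crossPairs f)
    fun P e => symbolId P (f e.1) = symbolId P (f e.2))
  push_cast at hmoment
  simp only [collisionCount]
  rw [hmoment]
  refine (sum_sum_le_of_diag_offDiag _ _ hdiag hoff).trans ?_
  have hmq : (#(crossPairs f) : ℝ) ≤ q := by exact_mod_cast hm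
  have hq₀ : (0 : ℝ) < q - 1 := by linarith
  have hpair : (#(crossPairs f) : ℝ) * (#(crossPairs f) - 1) *
      (#(sopiSpace ι F) / (q * (q - 1))) ≤ #(crossPairs f) * (#(sopiSpace ι F) / q) := by
    rw [show (#(crossPairs f) : ℝ) * (#(crossPairs f) - 1) * (#(sopiSpace ι F) / (q * (q - 1))) =
        #(crossPairs f) * (#(sopiSpace ι F) / q) * ((#(crossPairs f) - 1) / (q - 1)) by
      field_simp]
    exact mul_le_of_le_one_right (by positivity) ((div_le_one hq₀).2 (by linarith))
  rw [mul_div_assoc, mul_assoc]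
  linarith

theorem filter_card_image_lt_subset_filter_lt_collisionCount (hf : Injective f) {K : ℕ}
    {c : ℝ} (hK : (K : ℝ) = (1 - c) * Fintype.card κ) :
    (sopiSpace ι F).filter (fun P => #(univ.image fun k => symbolId P (f k)) < K) ⊆
      (sopiSpace ι F).filter fun P => c * Fintype.card κ < collisionCount f P := by
  intro P hP
  rw [mem_filter] at hP ⊢
  have hY : (#(univ.image fun k => symbolId P (f k)) : ℝ) < K := by exact_mod_cast hP.2
  have hYX : (Fintype.card κ : ℝ) ≤
      #(univ.image fun k => symbolId P (f k)) + collisionCount f P := by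
    exact_mod_cast card_le_card_image_add_collisionCount hf hP.1
  exact ⟨hP.1, by linarith⟩

theorem card_filter_lt_collisionCount_mul_le (hf : Injective f)
    (hκ : (Fintype.card κ : ℝ) ^ 2 ≤ 2 * q) {c : ℝ} (hc : 0 ≤ c) :
    (#((sopiSpace ι F).filter fun P => c * Fintype.card κ < collisionCount f P) : ℝ) *
      (c ^ 2 * q) ≤ #(sopiSpace ι F) := by
  have hm : (#(crossPairs f) : ℝ) * 2 ≤ (Fintype.card κ : ℝ) ^ 2 := by
    exact_mod_cast card_crossPairs_mul_two_le f
  have hmq : #(crossPairs f) ≤ q := by exact_mod_cast (by linarith : (#(crossPairs f) : ℝ) ≤ q)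
  have hmarkov := card_filter_lt_mul_sq_le_sum_sq (sopiSpace ι F)
    (fun P => (collisionCount f P : ℝ)) (mul_nonneg hc (Nat.cast_nonneg (Fintype.card κ)))
  have hq : (0 : ℝ) < q := by exact_mod_cast Fintype.card_pos
  rcases (Nat.cast_nonneg (Fintype.card κ) : (0 : ℝ) ≤ Fintype.card κ).eq_or_lt with hn | hn
  · have hcount (P : ι → F × F) : (collisionCount f P : ℝ) ≤ 0 := by
      have : (collisionCount f P : ℝ) ≤ #(crossPairs f) := by exact_mod_cast card_filter_le _ _
      rw [← hn] at hm
      nlinarith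
    rw [← hn, mul_zero, filter_false_of_mem fun P _ => not_lt.2 (hcount P)]
    simp
  refine le_of_mul_le_mul_right ?_ (pow_pos hn 2)
  calc _ = (#((sopiSpace ι F).filter fun P => c * Fintype.card κ < collisionCount f P) : ℝ) *
        (c * Fintype.card κ) ^ 2 * q := by ring
    _ ≤ 2 * #(crossPairs f) * #(sopiSpace ι F) / q * q := by
        gcongr; exact hmarkov.trans (sum_collisionCount_sq_le hf hmq)
    _ ≤ _ := by
        rw [div_mul_cancel₀ _ hq.ne']
        nlinarith [(Nat.cast_nonneg _ : (0 : ℝ) ≤ #(sopiSpace ι F))]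

end Sopi

open Sopi in
theorem sopi_recovery_failure_prob_general (N s M K : ℕ) (hN : N.Prime) [NeZero N]
    (δ : ℝ) (hδ : 0 < δ) (hδ1 : δ < 1)
    (hM : (M : ℝ) = (K : ℝ) / (1 - δ)) (hM2 : (M : ℝ) ^ 2 ≤ 2 * N)
    (f : Fin M → Fin s × ZMod N) (hf : Function.Injective f) :
    (((Finset.univ.filter (fun P : Fin s → ZMod N × ZMod N =>
          (∀ t, (P t).2 ≠ 0) ∧
          (Finset.univ.image (fun k : Fin M =>
            (P (f k).1).1 + (f k).2 * (P (f k).1).2)).card < K)).card : ℝ) /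
      ((Finset.univ.filter (fun P : Fin s → ZMod N × ZMod N =>
          ∀ t, (P t).2 ≠ 0)).card : ℝ)) ≤ 1 / (δ ^ 2 * N) := by
  have := Fact.mk hN
  have hΩ : (univ.filter fun P : Fin s → ZMod N × ZMod N => ∀ t, (P t).2 ≠ 0) =
      sopiSpace (Fin s) (ZMod N) := by
    ext P; simp [mem_sopiSpace]
  have hΩpos : (0 : ℝ) < #(sopiSpace (Fin s) (ZMod N)) := by
    exact_mod_cast card_pos.2 ⟨fun _ => (0, 1), mem_sopiSpace.2 fun _ => one_ne_zero⟩
  have hK : (K : ℝ) = (1 - δ) * Fintype.card (Fin M) := by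
    rw [Fintype.card_fin, hM]; field_simp [(by linarith : 1 - δ ≠ 0)]
  have hbad := card_le_card (filter_card_image_lt_subset_filter_lt_collisionCount hf hK)
  have htail := card_filter_lt_collisionCount_mul_le hf (by simpa using hM2) hδ.le
  rw [ZMod.card] at htail
  have hN₀ : (0 : ℝ) < N := by exact_mod_cast hN.pos
  rw [← filter_filter, hΩ, div_le_div_iff₀ hΩpos (by positivity), one_mul]
  exact (mul_le_mul_of_nonneg_right (by exact_mod_cast hbad) (by positivity)).trans htail

/-- Theorem 1 of the paper: `N` prime, `δ > 0`, `M = K/(1−δ)`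
symbols received in total from `s ≥ 1` stream objects with independent uniform
SOPIs, `M² ≤ 2N`.  Received symbol `k : Fin M` comes from stream `(f k).1` at
position `(f k).2` (distinct (stream, position) pairs), and its symbol ID is
`A + p·B` for its stream's SOPI `(A,B)`.  If `Y` is the number of distinct
symbol IDs among the `M` received symbols, then `Pr[Y < K] ≤ 1/(δ²·N)`. -/
theorem sopi_recovery_failure_prob (N s M K : ℕ) (hN : N.Prime) [NeZero N]
    (hs : 1 ≤ s) (δ : ℝ) (hδ : 0 < δ) (hδ1 : δ < 1)
    (hM : (M : ℝ) = (K : ℝ) / (1 - δ)) (hM2 : (M : ℝ) ^ 2 ≤ 2 * N)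
    (f : Fin M → Fin s × ZMod N) (hf : Function.Injective f) :
    (((Finset.univ.filter (fun P : Fin s → ZMod N × ZMod N =>
          (∀ t, (P t).2 ≠ 0) ∧
          (Finset.univ.image (fun k : Fin M =>
            (P (f k).1).1 + (f k).2 * (P (f k).1).2)).card < K)).card : ℝ) /
      ((Finset.univ.filter (fun P : Fin s → ZMod N × ZMod N =>
          ∀ t, (P t).2 ≠ 0)).card : ℝ)) ≤ 1 / (δ ^ 2 * N) :=
  sopi_recovery_failure_prob_general N s M K hN δ hδ hδ1 hM hM2 f hf
end

section
/- Let N be prime, M a positive integer with M² < N/2, and D = {−M+1,...,−1} ∪ {1,...,M−1}. Let B₀, B₁ ∈ {1,...,N-1}. Suppose (d₀,d₁) ∈ D × D matches with respect to (B₀,B₁) and is minimal, i.e., there is no (d₀',d₁') ∈ D × D matching with respect to (B₀,B₁) with (d₀',d₁') = c·(d₀,d₁) for a real c with 0 < |c| < 1. Then every (d₀',d₁') ∈ D × D that matches with respect to (B₀,B₁) is an integer multiple of (d₀,d₁). -/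
/-!
Two matching pairs `d, e` give, modulo `N`, `(e₀ d₁ - e₁ d₀) B₁ ≡ 0`; since `N` is prime and does
not divide `B₁`, the cross product `e₀ d₁ - e₁ d₀` is divisible by `N`, and as its absolute value
is below `2 M² < N` it vanishes. Minimality forces `gcd (d₀, d₁) = 1`: otherwise dividing by the
gcd `g` (a unit mod `N`, since `0 < g < N`) gives a smaller matching pair `g⁻¹ • d`. A pair
proportional to a coprime pair is an integer multiple of it.
-/

lemma mul_eq_mul_of_matches {R : Type*} [CommRing R] [IsDomain R] {B₀ B₁ d₀ d₁ e₀ e₁ : R}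
    (hB₁ : B₁ ≠ 0) (hd : d₀ * B₀ = d₁ * B₁) (he : e₀ * B₀ = e₁ * B₁) : e₀ * d₁ = e₁ * d₀ :=
  mul_right_cancel₀ hB₁ (by linear_combination d₀ * he - e₀ * hd)

lemma IsCoprime.exists_eq_mul_of_mul_eq_mul {R : Type*} [CommRing R] {a₀ a₁ b₀ b₁ : R}
    (h : IsCoprime a₀ a₁) (hb : b₀ * a₁ = b₁ * a₀) : ∃ k, b₀ = k * a₀ ∧ b₁ = k * a₁ := by
  obtain ⟨u, v, huv⟩ := h
  exact ⟨u * b₀ + v * b₁, by linear_combination -b₀ * huv + v * hb,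
    by linear_combination -b₁ * huv - u * hb⟩

lemma abs_mul_sub_mul_lt {α : Type*} [Ring α] [LinearOrder α] [IsStrictOrderedRing α]
    {M a₀ a₁ b₀ b₁ : α} (ha₀ : |a₀| < M) (ha₁ : |a₁| < M) (hb₀ : |b₀| < M) (hb₁ : |b₁| < M) :
    |b₀ * a₁ - b₁ * a₀| < 2 * M ^ 2 := by
  have h₀ : |b₀ * a₁| < M ^ 2 := by
    rw [abs_mul, sq]; exact mul_lt_mul'' hb₀ ha₁ (abs_nonneg _) (abs_nonneg _)
  have h₁ : |b₁ * a₀| < M ^ 2 := by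
    rw [abs_mul, sq]; exact mul_lt_mul'' hb₁ ha₀ (abs_nonneg _) (abs_nonneg _)
  calc |b₀ * a₁ - b₁ * a₀| ≤ |b₀ * a₁| + |b₁ * a₀| := abs_sub _ _
    _ < M ^ 2 + M ^ 2 := add_lt_add h₀ h₁
    _ = 2 * M ^ 2 := (two_mul _).symm

lemma Int.eq_of_intCast_zmod_eq_of_abs_sub_lt {N : ℕ} {a b : ℤ} (h : (a : ZMod N) = b)
    (hlt : |a - b| < N) : a = b :=
  Int.eq_of_sub_eq_zero <|
    Int.eq_zero_of_abs_lt_dvd ((ZMod.intCast_eq_intCast_iff_dvd_sub _ _ _).1 h.symm) hlt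

lemma Int.abs_le_abs_of_dvd {a b : ℤ} (hb : b ≠ 0) (h : a ∣ b) : |a| ≤ |b| :=
  Int.le_of_dvd (abs_pos.2 hb) ((abs_dvd_abs _ _).2 h)

lemma ZMod.intCast_ne_zero_of_pos_of_lt {N : ℕ} {a : ℤ} (ha : 0 < a) (haN : a < N) :
    (a : ZMod N) ≠ 0 := by
  rw [Ne, ZMod.intCast_zmod_eq_zero_iff_dvd]
  exact fun h => (Int.le_of_dvd ha h).not_gt haN

lemma exists_smaller_match_of_gcd_ne_one {N : ℕ} [Fact N.Prime] {M B₀ B₁ d₀ d₁ : ℤ}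
    (hMN : M ≤ N) (hd₀ : d₀ ≠ 0 ∧ |d₀| < M) (hd₁ : d₁ ≠ 0 ∧ |d₁| < M)
    (hmatch : d₀ * B₀ ≡ d₁ * B₁ [ZMOD N]) (hg : Int.gcd d₀ d₁ ≠ 1) :
    ∃ (e₀ e₁ : ℤ) (c : ℝ), e₀ ≠ 0 ∧ |e₀| < M ∧ e₁ ≠ 0 ∧ |e₁| < M ∧
      (e₀ * B₀ ≡ e₁ * B₁ [ZMOD N]) ∧ 0 < |c| ∧ |c| < 1 ∧
      (e₀ : ℝ) = c * d₀ ∧ (e₁ : ℝ) = c * d₁ := by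
  set g := Int.gcd d₀ d₁
  have hg₀ : 0 < (g : ℤ) := by exact_mod_cast Int.gcd_pos_of_ne_zero_left d₁ hd₀.1
  have hgd₀ : (g : ℤ) ∣ d₀ := Int.gcd_dvd_left _ _
  have hgd₁ : (g : ℤ) ∣ d₁ := Int.gcd_dvd_right _ _
  clear_value g
  obtain ⟨p₀, rfl⟩ := hgd₀
  obtain ⟨p₁, rfl⟩ := hgd₁
  have hgN : (g : ℤ) < N := calc
    (g : ℤ) = |(g : ℤ)| := (abs_of_pos hg₀).symm
    _ ≤ |g * p₀| := Int.abs_le_abs_of_dvd hd₀.1 (dvd_mul_right _ _)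
    _ < N := hd₀.2.trans_le hMN
  have hp_match : ((p₀ * B₀ : ℤ) : ZMod N) = (p₁ * B₁ : ℤ) := by
    refine mul_left_cancel₀ (ZMod.intCast_ne_zero_of_pos_of_lt hg₀ hgN) ?_
    have := (ZMod.intCast_eq_intCast_iff _ _ N).2 hmatch
    push_cast at this ⊢
    linear_combination this
  have hg₁ : (1 : ℝ) < g := by exact_mod_cast (show 1 < g by omega)
  have hgR : (g : ℝ) ≠ 0 := (zero_lt_one.trans hg₁).ne'
  refine ⟨p₀, p₁, (g : ℝ)⁻¹, right_ne_zero_of_mul hd₀.1,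
    (Int.abs_le_abs_of_dvd hd₀.1 (dvd_mul_left _ _)).trans_lt hd₀.2,
    right_ne_zero_of_mul hd₁.1, (Int.abs_le_abs_of_dvd hd₁.1 (dvd_mul_left _ _)).trans_lt hd₁.2,
    (ZMod.intCast_eq_intCast_iff _ _ N).1 hp_match, abs_pos.2 (inv_ne_zero hgR), ?_, ?_, ?_⟩
  · rw [abs_inv, abs_of_pos (zero_lt_one.trans hg₁)]
    exact inv_lt_one_of_one_lt₀ hg₁
  all_goals
    push_cast
    field_simp

theorem minimal_match_generates_general (N M : ℕ) (hN : N.Prime)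
    (hMN : 2 * (M : ℤ) ^ 2 < (N : ℤ))
    (B₀ B₁ : ℤ) (hB₁ : 1 ≤ B₁ ∧ B₁ < (N : ℤ))
    (d₀ d₁ : ℤ) (hd₀ : d₀ ≠ 0 ∧ |d₀| < (M : ℤ)) (hd₁ : d₁ ≠ 0 ∧ |d₁| < (M : ℤ))
    (hmatch : d₀ * B₀ ≡ d₁ * B₁ [ZMOD (N : ℤ)])
    (hmin : ¬ ∃ (e₀ e₁ : ℤ) (c : ℝ), e₀ ≠ 0 ∧ |e₀| < (M : ℤ) ∧ e₁ ≠ 0 ∧ |e₁| < (M : ℤ) ∧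
        (e₀ * B₀ ≡ e₁ * B₁ [ZMOD (N : ℤ)]) ∧ 0 < |c| ∧ |c| < 1 ∧
        (e₀ : ℝ) = c * (d₀ : ℝ) ∧ (e₁ : ℝ) = c * (d₁ : ℝ)) :
    ∀ e₀ e₁ : ℤ, e₀ ≠ 0 → |e₀| < (M : ℤ) → e₁ ≠ 0 → |e₁| < (M : ℤ) →
      (e₀ * B₀ ≡ e₁ * B₁ [ZMOD (N : ℤ)]) →
      ∃ k : ℤ, e₀ = k * d₀ ∧ e₁ = k * d₁ := by
  intro e₀ e₁ he₀ he₀M he₁ he₁M he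
  have := Fact.mk hN
  have hM_le_N : (M : ℤ) ≤ N := by nlinarith
  have hcop : IsCoprime d₀ d₁ := Int.isCoprime_iff_gcd_eq_one.2 <| by
    by_contra hg
    exact hmin (exists_smaller_match_of_gcd_ne_one hM_le_N hd₀ hd₁ hmatch hg)
  have hcross_zmod : ((e₀ * d₁ : ℤ) : ZMod N) = (e₁ * d₀ : ℤ) := by
    have hd := (ZMod.intCast_eq_intCast_iff _ _ N).2 hmatch
    have he := (ZMod.intCast_eq_intCast_iff _ _ N).2 he
    push_cast at hd he ⊢
    exact mul_eq_mul_of_matches (ZMod.intCast_ne_zero_of_pos_of_lt hB₁.1 hB₁.2) hd he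
  have hcross : e₀ * d₁ = e₁ * d₀ := Int.eq_of_intCast_zmod_eq_of_abs_sub_lt hcross_zmod
    ((abs_mul_sub_mul_lt hd₀.2 hd₁.2 he₀M he₁M).trans hMN)
  exact hcop.exists_eq_mul_of_mul_eq_mul hcross

/-- `N` prime, `M > 0` with `M² < N/2`,
`D = {−M+1,...,−1} ∪ {1,...,M−1}` (i.e. `d ∈ D ↔ d ≠ 0 ∧ |d| < M`),
`B₀, B₁ ∈ {1,...,N-1}`.  If `(d₀,d₁) ∈ D × D` matches w.r.t. `(B₀,B₁)`
(`d₀·B₀ ≡ d₁·B₁ (mod N)`) and is minimal (no matching `(d₀',d₁') ∈ D × D` is a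
real multiple `c·(d₀,d₁)` with `0 < |c| < 1`), then every matching
`(d₀',d₁') ∈ D × D` is an integer multiple of `(d₀,d₁)`. -/
theorem minimal_match_generates (N M : ℕ) (hN : N.Prime) (hM : 0 < M)
    (hMN : 2 * (M : ℤ) ^ 2 < (N : ℤ))
    (B₀ B₁ : ℤ) (hB₀ : 1 ≤ B₀ ∧ B₀ < (N : ℤ)) (hB₁ : 1 ≤ B₁ ∧ B₁ < (N : ℤ))
    (d₀ d₁ : ℤ) (hd₀ : d₀ ≠ 0 ∧ |d₀| < (M : ℤ)) (hd₁ : d₁ ≠ 0 ∧ |d₁| < (M : ℤ))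
    (hmatch : d₀ * B₀ ≡ d₁ * B₁ [ZMOD (N : ℤ)])
    (hmin : ¬ ∃ (e₀ e₁ : ℤ) (c : ℝ), e₀ ≠ 0 ∧ |e₀| < (M : ℤ) ∧ e₁ ≠ 0 ∧ |e₁| < (M : ℤ) ∧
        (e₀ * B₀ ≡ e₁ * B₁ [ZMOD (N : ℤ)]) ∧ 0 < |c| ∧ |c| < 1 ∧
        (e₀ : ℝ) = c * (d₀ : ℝ) ∧ (e₁ : ℝ) = c * (d₁ : ℝ)) :
    ∀ e₀ e₁ : ℤ, e₀ ≠ 0 → |e₀| < (M : ℤ) → e₁ ≠ 0 → |e₁| < (M : ℤ) →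
      (e₀ * B₀ ≡ e₁ * B₁ [ZMOD (N : ℤ)]) →
      ∃ k : ℤ, e₀ = k * d₀ ∧ e₁ = k * d₁ :=
  minimal_match_generates_general N M hN hMN B₀ B₁ hB₁ d₀ d₁ hd₀ hd₁ hmatch hmin
end

section
/- Let N be prime with M² < N/2, and let d₀, d₁, d₀', d₁' ∈ D = {−M+1,...,M−1} \ {0} with both (d₀,d₁) and (d₀',d₁') matching with respect to (B₀,B₁) for B₀,B₁ ∈ {1,...,N-1}. Then d₀'·d₁ = d₁'·d₀ as integers. -/
/-- `N` prime with `M² < N/2`; `d₀, d₁, d₀', d₁'` nonzero with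
absolute value less than `M` (i.e. in `D = {−M+1,...,M−1} \ {0}`); if both
`(d₀,d₁)` and `(d₀',d₁')` match with respect to `(B₀,B₁)` (with
`B₀, B₁ ∈ {1,...,N-1}`) then `d₀'·d₁ = d₁'·d₀` as integers. -/
theorem matches_cross_product_eq (N M : ℕ) (hN : N.Prime)
    (hMN : 2 * (M : ℤ) ^ 2 < (N : ℤ))
    (B₀ B₁ : ℤ) (hB₀ : 1 ≤ B₀ ∧ B₀ < (N : ℤ)) (hB₁ : 1 ≤ B₁ ∧ B₁ < (N : ℤ))
    (d₀ d₁ d₀' d₁' : ℤ)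
    (hd₀ : d₀ ≠ 0 ∧ |d₀| < (M : ℤ)) (hd₁ : d₁ ≠ 0 ∧ |d₁| < (M : ℤ))
    (hd₀' : d₀' ≠ 0 ∧ |d₀'| < (M : ℤ)) (hd₁' : d₁' ≠ 0 ∧ |d₁'| < (M : ℤ))
    (h : d₀ * B₀ ≡ d₁ * B₁ [ZMOD (N : ℤ)])
    (h' : d₀' * B₀ ≡ d₁' * B₁ [ZMOD (N : ℤ)]) :
    d₀' * d₁ = d₁' * d₀ := by
  have h1 : d₀' * (d₀ * B₀) ≡ d₀' * (d₁ * B₁) [ZMOD (N : ℤ)] := h.mul_left _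
  have h2 : d₀ * (d₀' * B₀) ≡ d₀ * (d₁' * B₁) [ZMOD (N : ℤ)] := h'.mul_left _
  have h3 : d₀' * d₁ * B₁ ≡ d₁' * d₀ * B₁ [ZMOD (N : ℤ)] := by
    calc d₀' * d₁ * B₁ ≡ d₀' * (d₀ * B₀) [ZMOD (N : ℤ)] := by
          have : d₀' * d₁ * B₁ = d₀' * (d₁ * B₁) := by ring
          rw [this]; exact h1.symm
      _ = d₀ * (d₀' * B₀) := by ring
      _ ≡ d₀ * (d₁' * B₁) [ZMOD (N : ℤ)] := h2
      _ = d₁' * d₀ * B₁ := by ring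
  have hdvd : (N : ℤ) ∣ (d₀' * d₁ - d₁' * d₀) * B₁ := by
    have := h3.symm.dvd
    convert this using 1
    ring
  have hNB : ¬ (N : ℤ) ∣ B₁ := by
    intro hd
    rcases hd with ⟨c, rfl⟩
    have hN1 : 1 ≤ (N : ℤ) := by exact_mod_cast hN.one_lt.le
    rcases hB₁ with ⟨h1', h2'⟩
    have hc : 1 ≤ c := by nlinarith
    nlinarith
  have hprime : Prime (N : ℤ) := Nat.prime_iff_prime_int.mp hN
  have hdvd2 : (N : ℤ) ∣ (d₀' * d₁ - d₁' * d₀) :=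
    (hprime.dvd_mul.mp hdvd).resolve_right hNB
  have hbound : |d₀' * d₁ - d₁' * d₀| < (N : ℤ) := by
    have := abs_sub (d₀' * d₁) (d₁' * d₀)
    rw [abs_mul, abs_mul] at *
    have h0 : 0 ≤ |d₀| := abs_nonneg _
    have h0' : 0 ≤ |d₀'| := abs_nonneg _
    have h1' : 0 ≤ |d₁| := abs_nonneg _
    have h1'' : 0 ≤ |d₁'| := abs_nonneg _
    nlinarith [abs_sub (d₀' * d₁) (d₁' * d₀), abs_mul d₀' d₁, abs_mul d₁' d₀]
  have := Int.eq_zero_of_abs_lt_dvd hdvd2 hbound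
  linarith
end

section
/- Let N be prime, M² < N/2, B₀, B₁ ∈ {1,...,N-1} with B₀ ≠ B₁, and suppose no pair (d₀,d₁) ∈ D × D matches with respect to (B₀,B₁), where D = {−M+1,...,M−1}\{0}. Then for any A₀, A₁, the prefixes of lengths m₀ and m₁ (with m₀ + m₁ ≤ M) of the permutations defined by (A₀,B₀) and (A₁,B₁) share at most one common symbol ID. -/
/-- `N` prime, `M² < N/2`, `B₀ ≠ B₁` in `{1,...,N-1}`, and no
pair `(d₀,d₁) ∈ D × D` (with `D = {−M+1,...,M−1} \ {0}`) matches with respect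
to `(B₀,B₁)` (`d₀·B₀ ≡ d₁·B₁ (mod N)`).  Then for any `A₀, A₁` and prefix
lengths `m₀ + m₁ ≤ M`, the prefixes of the permutations `i ↦ (A + i·B) mod N`
defined by `(A₀,B₀)` and `(A₁,B₁)` share at most one common symbol ID. -/
theorem no_match_at_most_one_common (N M : ℕ) (hN : N.Prime)
    (hMN : 2 * M ^ 2 < N)
    (B₀ B₁ : ℕ) (hB₀ : 1 ≤ B₀ ∧ B₀ < N) (hB₁ : 1 ≤ B₁ ∧ B₁ < N) (hBne : B₀ ≠ B₁)
    (hnomatch : ∀ d₀ d₁ : ℤ, d₀ ≠ 0 → |d₀| < (M : ℤ) → d₁ ≠ 0 → |d₁| < (M : ℤ) →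
      ¬ (d₀ * (B₀ : ℤ) ≡ d₁ * (B₁ : ℤ) [ZMOD (N : ℤ)]))
    (A₀ A₁ m₀ m₁ : ℕ) (hm : m₀ + m₁ ≤ M) :
    (((Finset.range m₀).image (fun p => (A₀ + p * B₀) % N)) ∩
      ((Finset.range m₁).image (fun p => (A₁ + p * B₁) % N))).card ≤ 1 := by
  rw [Finset.card_le_one]
  intro a ha b hb
  by_contra hab
  simp only [Finset.mem_inter, Finset.mem_image, Finset.mem_range] at ha hb
  obtain ⟨⟨p₀, hp₀, hap₀⟩, ⟨p₁, hp₁, hap₁⟩⟩ := ha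
  obtain ⟨⟨q₀, hq₀, hbq₀⟩, ⟨q₁, hq₁, hbq₁⟩⟩ := hb
  have hp₀q₀ : p₀ ≠ q₀ := by rintro rfl; exact hab (hap₀.symm.trans hbq₀)
  have hp₁q₁ : p₁ ≠ q₁ := by rintro rfl; exact hab (hap₁.symm.trans hbq₁)
  -- congruences
  have h0 : (A₀ + p₀ * B₀ : ℤ) ≡ (A₁ + p₁ * B₁ : ℤ) [ZMOD (N : ℤ)] := by
    have : (A₀ + p₀ * B₀ : ℕ) ≡ (A₁ + p₁ * B₁ : ℕ) [MOD N] := hap₀.trans hap₁.symm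
    exact_mod_cast Int.natCast_modEq_iff.mpr this
  have h1 : (A₀ + q₀ * B₀ : ℤ) ≡ (A₁ + q₁ * B₁ : ℤ) [ZMOD (N : ℤ)] := by
    have : (A₀ + q₀ * B₀ : ℕ) ≡ (A₁ + q₁ * B₁ : ℕ) [MOD N] := hbq₀.trans hbq₁.symm
    exact_mod_cast Int.natCast_modEq_iff.mpr this
  have key : ((q₀ : ℤ) - p₀) * B₀ ≡ ((q₁ : ℤ) - p₁) * B₁ [ZMOD (N : ℤ)] := by
    have H := h1.sub h0
    have e0 : ((q₀ : ℤ) - p₀) * B₀ = (A₀ + q₀ * B₀ : ℤ) - (A₀ + p₀ * B₀ : ℤ) := by ring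
    have e1 : ((q₁ : ℤ) - p₁) * B₁ = (A₁ + q₁ * B₁ : ℤ) - (A₁ + p₁ * B₁ : ℤ) := by ring
    rw [e0, e1]; exact H
  have hd0 : ((q₀ : ℤ) - p₀) ≠ 0 := by
    intro h; exact hp₀q₀ (by omega)
  have hd1 : ((q₁ : ℤ) - p₁) ≠ 0 := by
    intro h; exact hp₁q₁ (by omega)
  have habs0 : |((q₀ : ℤ) - p₀)| < (M : ℤ) := by
    rw [abs_lt]; omega
  have habs1 : |((q₁ : ℤ) - p₁)| < (M : ℤ) := by
    rw [abs_lt]; omega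
  exact hnomatch _ _ hd0 habs0 hd1 habs1 key
end

section
/- Let N be prime, M² < N/2, and let B₀, B₁ ∈ {1,...,N-1} have distance d (in the sense of Lemma 2: d = 2M if no pair in D × D matches, and d = |d₀| + |d₁| for a minimal matching pair (d₀,d₁) otherwise). Then for any A₀, A₁ ∈ {0,...,N-1}, the number of distinct symbol IDs among the prefixes of lengths m₀ and m₁ (total m = m₀ + m₁ ≤ M) of the permutations defined by (A₀,B₀) and (A₁,B₁) is at least m − ⌊(m−2)/d⌋ − 1. -/
lemma pob_collide {N A₀ B₀ A₁ B₁ p q p' q' : ℕ}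
    (h : (A₀ + p * B₀) % N = (A₁ + q * B₁) % N)
    (h' : (A₀ + p' * B₀) % N = (A₁ + q' * B₁) % N) :
    ((p:ℤ) - p') * B₀ ≡ ((q:ℤ) - q') * B₁ [ZMOD (N:ℤ)] := by
  have h1 : ((A₀:ℤ) + p * B₀) ≡ ((A₁:ℤ) + q * B₁) [ZMOD (N:ℤ)] := by
    have := congrArg (fun t : ℕ => (t : ℤ)) h
    push_cast at this
    exact this
  have h2 : ((A₀:ℤ) + p' * B₀) ≡ ((A₁:ℤ) + q' * B₁) [ZMOD (N:ℤ)] := by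
    have := congrArg (fun t : ℕ => (t : ℤ)) h'
    push_cast at this
    exact this
  have e1 : ((p:ℤ)-p')*B₀ = ((A₀:ℤ)+p*B₀) - ((A₀:ℤ)+p'*B₀) := by ring
  have e2 : ((q:ℤ)-q')*B₁ = ((A₁:ℤ)+q*B₁) - ((A₁:ℤ)+q'*B₁) := by ring
  rw [e1, e2]
  exact h1.sub h2

lemma pob_zero {N M : ℕ} (hN : N.Prime) (hMN : M < N) {B : ℕ}
    (hB : 1 ≤ B ∧ B < N) {e : ℤ} (hd : (N:ℤ) ∣ e * B) (he : |e| < (M:ℤ)) : e = 0 := by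
  have hp : Prime (N:ℤ) := Nat.prime_iff_prime_int.mp hN
  rcases hp.dvd_mul.mp hd with h | h
  · refine Int.eq_zero_of_dvd_of_natAbs_lt_natAbs h ?_
    have h2 : (e.natAbs : ℤ) < M := by rwa [Int.abs_eq_natAbs] at he
    simp only [Int.natAbs_cast]
    omega
  · exfalso
    have h3 := Int.natCast_dvd_natCast.mp h
    have h4 := Nat.le_of_dvd (by omega) h3
    omega

lemma pob_zero' {N M : ℕ} (hN : N.Prime) (hMN : M < N) {B₀ B₁ : ℕ}
    (hB₀ : 1 ≤ B₀ ∧ B₀ < N) (hB₁ : 1 ≤ B₁ ∧ B₁ < N) {e₀ e₁ : ℤ}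
    (h : e₀ * B₀ ≡ e₁ * B₁ [ZMOD (N:ℤ)]) (he₀ : |e₀| < (M:ℤ)) (h1 : e₁ = 0) : e₀ = 0 := by
  subst h1
  have hd : (N:ℤ) ∣ e₀ * B₀ := by
    have := h.dvd
    simpa using this
  exact pob_zero hN hMN hB₀ hd he₀

/-- Lemma on pairwise overlap: `N` prime, `M² < N/2`,
`B₀, B₁ ∈ {1,...,N-1}` at distance `d`, where (with
`D = {−M+1,...,M−1} \ {0}` and "`(d₀,d₁)` matches" meaning
`d₀·B₀ ≡ d₁·B₁ (mod N)`): either no pair in `D × D` matches and `d = 2M`, or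
there is a matching pair `(d₀,d₁) ∈ D × D` such that every matching pair in
`D × D` is an integer multiple of it, and `d = |d₀| + |d₁|`.  Then for any
`A₀, A₁` and prefix lengths `m₀, m₁` with `m = m₀ + m₁ ≤ M`, the number of
distinct symbol IDs in the two prefixes of the permutations
`i ↦ (A + i·B) mod N` is at least `m − ⌊(m−2)/d⌋ − 1`. -/
theorem pairwise_overlap_bound (N M d : ℕ) (hN : N.Prime)
    (hMN : 2 * M ^ 2 < N)
    (B₀ B₁ : ℕ) (hB₀ : 1 ≤ B₀ ∧ B₀ < N) (hB₁ : 1 ≤ B₁ ∧ B₁ < N)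
    (hdist :
      (d = 2 * M ∧ ∀ d₀ d₁ : ℤ, d₀ ≠ 0 → |d₀| < (M : ℤ) → d₁ ≠ 0 → |d₁| < (M : ℤ) →
        ¬ (d₀ * (B₀ : ℤ) ≡ d₁ * (B₁ : ℤ) [ZMOD (N : ℤ)])) ∨
      (∃ d₀ d₁ : ℤ, d₀ ≠ 0 ∧ |d₀| < (M : ℤ) ∧ d₁ ≠ 0 ∧ |d₁| < (M : ℤ) ∧
        (d₀ * (B₀ : ℤ) ≡ d₁ * (B₁ : ℤ) [ZMOD (N : ℤ)]) ∧
        (∀ e₀ e₁ : ℤ, e₀ ≠ 0 → |e₀| < (M : ℤ) → e₁ ≠ 0 → |e₁| < (M : ℤ) →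
          (e₀ * (B₀ : ℤ) ≡ e₁ * (B₁ : ℤ) [ZMOD (N : ℤ)]) →
          ∃ k : ℤ, e₀ = k * d₀ ∧ e₁ = k * d₁) ∧
        (d : ℤ) = |d₀| + |d₁|))
    (A₀ A₁ m₀ m₁ : ℕ) (hm : m₀ + m₁ ≤ M) :
    (((((Finset.range m₀).image (fun p => (A₀ + p * B₀) % N)) ∪
        ((Finset.range m₁).image (fun p => (A₁ + p * B₁) % N))).card : ℤ)) ≥
      ((m₀ + m₁ : ℕ) : ℤ) - Int.fdiv (((m₀ + m₁ : ℕ) : ℤ) - 2) (d : ℤ) - 1 := by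
  classical
  set S₀ := (Finset.range m₀).image (fun p => (A₀ + p * B₀) % N) with hS₀
  set S₁ := (Finset.range m₁).image (fun p => (A₁ + p * B₁) % N) with hS₁
  rcases Nat.eq_zero_or_pos M with hM0 | hM0
  · have h0 : m₀ = 0 := by omega
    have h1 : m₁ = 0 := by omega
    have hd0 : d = 0 := by
      rcases hdist with ⟨hd, _⟩ | ⟨d₀, d₁, _, ha0, _⟩
      · omega
      · exfalso; have := abs_nonneg d₀; rw [hM0] at ha0; push_cast at ha0; omega
    subst h0 h1 hd0 hM0
    simp [hS₀, hS₁]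
  -- main case
  have hMltN : M < N := by nlinarith
  have hd2 : 2 ≤ d := by
    rcases hdist with ⟨hd, _⟩ | ⟨d₀, d₁, h0, ha0, h1, ha1, _, _, hdeq⟩
    · omega
    · have g0 : (1:ℤ) ≤ |d₀| := Int.one_le_abs h0
      have g1 : (1:ℤ) ≤ |d₁| := Int.one_le_abs h1
      have : (2:ℤ) ≤ (d:ℤ) := by rw [hdeq]; linarith
      exact_mod_cast this
  have hdZ : (0:ℤ) < (d:ℤ) := by exact_mod_cast (by omega : 0 < d)
  have hinj : ∀ (A B mm : ℕ), 1 ≤ B → B < N → mm ≤ M →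
      Set.InjOn (fun p => (A + p * B) % N) ↑(Finset.range mm) := by
    intro A B mm hB1 hBN hmm p hp p' hp' hpp
    simp only [Finset.coe_range, Set.mem_Iio] at hp hp'
    have hcol := pob_collide (N := N) (A₀ := A) (B₀ := B) (A₁ := A) (B₁ := B)
      (p := p) (q := p') (p' := p') (q' := p') hpp rfl
    have habs : |(p:ℤ) - p'| < (M:ℤ) := by rw [abs_lt]; omega
    have := pob_zero' hN hMltN ⟨hB1, hBN⟩ ⟨hB1, hBN⟩ hcol habs (by ring)
    omega
  have hcard₀ : S₀.card = m₀ := by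
    rw [hS₀, Finset.card_image_of_injOn (hinj A₀ B₀ m₀ hB₀.1 hB₀.2 (by omega)),
      Finset.card_range]
  have hcard₁ : S₁.card = m₁ := by
    rw [hS₁, Finset.card_image_of_injOn (hinj A₁ B₁ m₁ hB₁.1 hB₁.2 (by omega)),
      Finset.card_range]
  have hfd : Int.fdiv (((m₀ + m₁ : ℕ) : ℤ) - 2) (d:ℤ) = (((m₀ + m₁ : ℕ) : ℤ) - 2) / d :=
    Int.fdiv_eq_ediv_of_nonneg _ (by omega)
  suffices hI : ((S₀ ∩ S₁).card : ℤ) ≤ (((m₀ + m₁ : ℕ) : ℤ) - 2) / d + 1 by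
    have hu := Finset.card_union_add_card_inter S₀ S₁
    rw [hcard₀, hcard₁] at hu
    have hu' : ((S₀ ∪ S₁).card : ℤ) + ((S₀ ∩ S₁).card : ℤ) = (m₀:ℤ) + m₁ := by
      exact_mod_cast congrArg (fun t : ℕ => (t:ℤ)) hu
    rw [ge_iff_le, hfd]
    push_cast at hI hu' ⊢
    linarith
  rcases Finset.eq_empty_or_nonempty (S₀ ∩ S₁) with hemp | ⟨x, hx⟩
  · rw [hemp]
    simp only [Finset.card_empty, Nat.cast_zero]
    have h9 : (-1:ℤ) ≤ (((m₀ + m₁ : ℕ) : ℤ) - 2) / d :=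
      (Int.le_ediv_iff_mul_le hdZ).mpr (by push_cast; omega)
    linarith
  -- nonempty intersection
  rw [Finset.mem_inter] at hx
  obtain ⟨hx0, hx1⟩ := hx
  rw [hS₀, Finset.mem_image] at hx0
  rw [hS₁, Finset.mem_image] at hx1
  obtain ⟨px, hpx, hfpx⟩ := hx0
  obtain ⟨qx, hqx, hfqx⟩ := hx1
  rw [Finset.mem_range] at hpx hqx
  have hm₀1 : 1 ≤ m₀ := by omega
  have hm₁1 : 1 ≤ m₁ := by omega
  have hednn : (0:ℤ) ≤ (((m₀ + m₁ : ℕ) : ℤ) - 2) / d :=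
    Int.ediv_nonneg (by push_cast; omega) (by omega)
  rcases hdist with ⟨hd, hno⟩ | ⟨d₀, d₁, hd₀, hd₀M, hd₁, hd₁M, hmatch, hmin, hdeq⟩
  · -- no matching pair: at most one common element
    have hone : (S₀ ∩ S₁).card ≤ 1 := by
      rw [Finset.card_le_one]
      intro a ha b hb
      rw [Finset.mem_inter] at ha hb
      obtain ⟨ha0, ha1⟩ := ha
      obtain ⟨hb0, hb1⟩ := hb
      rw [hS₀, Finset.mem_image] at ha0 hb0
      rw [hS₁, Finset.mem_image] at ha1 hb1
      obtain ⟨p, hp, hfp⟩ := ha0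
      obtain ⟨q, hq, hfq⟩ := ha1
      obtain ⟨p', hp', hfp'⟩ := hb0
      obtain ⟨q', hq', hfq'⟩ := hb1
      rw [Finset.mem_range] at hp hq hp' hq'
      by_contra hab
      have hcol := pob_collide (hfp.trans hfq.symm) (hfp'.trans hfq'.symm)
      have hpne : p ≠ p' := by
        intro h; apply hab; rw [← hfp, ← hfp', h]
      have habs₀ : |(p:ℤ) - p'| < (M:ℤ) := by rw [abs_lt]; omega
      have habs₁ : |(q:ℤ) - q'| < (M:ℤ) := by rw [abs_lt]; omega
      have he₀ : (p:ℤ) - p' ≠ 0 := by omega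
      have he₁ : (q:ℤ) - q' ≠ 0 := by
        intro h
        have := pob_zero' hN hMltN hB₀ hB₁ hcol habs₀ h
        omega
      exact hno _ _ he₀ habs₀ he₁ habs₁ hcol
    have : ((S₀ ∩ S₁).card : ℤ) ≤ 1 := by exact_mod_cast hone
    linarith
  · -- minimal matching pair case
    set P := ((Finset.range m₀) ×ˢ (Finset.range m₁)).filter
      (fun pq => (A₀ + pq.1 * B₀) % N = (A₁ + pq.2 * B₁) % N) with hP
    have hPmem : ∀ pq : ℕ × ℕ, pq ∈ P ↔
        pq.1 < m₀ ∧ pq.2 < m₁ ∧ (A₀ + pq.1 * B₀) % N = (A₁ + pq.2 * B₁) % N := by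
      intro pq
      rw [hP, Finset.mem_filter, Finset.mem_product, Finset.mem_range, Finset.mem_range]
      tauto
    have hsub : S₀ ∩ S₁ ⊆ P.image (fun pq => (A₀ + pq.1 * B₀) % N) := by
      intro y hy
      rw [Finset.mem_inter] at hy
      obtain ⟨hy0, hy1⟩ := hy
      rw [hS₀, Finset.mem_image] at hy0
      rw [hS₁, Finset.mem_image] at hy1
      obtain ⟨p, hp, hfp⟩ := hy0
      obtain ⟨q, hq, hfq⟩ := hy1
      rw [Finset.mem_range] at hp hq
      exact Finset.mem_image.mpr ⟨(p, q), (hPmem _).mpr ⟨hp, hq, hfp.trans hfq.symm⟩, hfp⟩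
    have hcardP : (S₀ ∩ S₁).card ≤ P.card :=
      le_trans (Finset.card_le_card hsub) Finset.card_image_le
    have huniq : ∀ pq ∈ P, ∀ pq' ∈ P, pq.1 = pq'.1 → pq = pq' := by
      intro pq hpq pq' hpq' h1
      rw [hPmem] at hpq hpq'
      have hcol := pob_collide hpq.2.2 hpq'.2.2
      have hq1 := hpq.2.1
      have hq1' := hpq'.2.1
      have he0 : ((pq.1:ℤ) - pq'.1) = 0 := by rw [h1]; ring
      have habs : |(pq.2:ℤ) - pq'.2| < (M:ℤ) := by rw [abs_lt]; omega
      have he1 := pob_zero' hN hMltN hB₁ hB₀ hcol.symm habs he0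
      have : pq.2 = pq'.2 := by omega
      exact Prod.ext h1 this
    have hPne : (px, qx) ∈ P :=
      (hPmem _).mpr ⟨hpx, hqx, hfpx.trans hfqx.symm⟩
    set pq₀ : ℕ × ℕ := (px, qx) with hpq₀def
    have hk : ∀ pq ∈ P, ∃ k : ℤ, (pq.1:ℤ) - pq₀.1 = k * d₀ ∧ (pq.2:ℤ) - pq₀.2 = k * d₁ := by
      intro pq hpq
      by_cases hcase : pq.1 = pq₀.1
      · have heq := huniq pq hpq pq₀ hPne hcase
        exact ⟨0, by rw [heq]; ring_nf; simp⟩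
      · have h1 := (hPmem pq).mp hpq
        have h0 := (hPmem pq₀).mp hPne
        have hcol := pob_collide h1.2.2 h0.2.2
        have he₀ : (pq.1:ℤ) - pq₀.1 ≠ 0 := by omega
        have habs₀ : |(pq.1:ℤ) - pq₀.1| < (M:ℤ) := by
          rw [abs_lt]; have := h1.1; have := h0.1; omega
        have habs₁ : |(pq.2:ℤ) - pq₀.2| < (M:ℤ) := by
          rw [abs_lt]; have := h1.2.1; have := h0.2.1; omega
        have he₁ : (pq.2:ℤ) - pq₀.2 ≠ 0 := by
          intro h
          exact he₀ (pob_zero' hN hMltN hB₀ hB₁ hcol habs₀ h)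
        exact hmin _ _ he₀ habs₀ he₁ habs₁ hcol
    set κ : ℕ × ℕ → ℤ := fun pq => ((pq.1:ℤ) - pq₀.1) / d₀ with hκ
    have hκval : ∀ pq ∈ P, (pq.1:ℤ) - pq₀.1 = κ pq * d₀ ∧ (pq.2:ℤ) - pq₀.2 = κ pq * d₁ := by
      intro pq hpq
      obtain ⟨k, h1, h2⟩ := hk pq hpq
      have hκk : κ pq = k := by
        rw [hκ]; simp only; rw [h1]; exact Int.mul_ediv_cancel k hd₀
      rw [hκk]; exact ⟨h1, h2⟩
    have hκinj : Set.InjOn κ ↑P := by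
      intro a ha b hb hab
      have h1 := hκval a (Finset.mem_coe.mp ha)
      have h2 := hκval b (Finset.mem_coe.mp hb)
      have hfst : (a.1:ℤ) = b.1 := by
        have g1 := h1.1
        have g2 := h2.1
        rw [hab] at g1
        linarith
      exact huniq a (Finset.mem_coe.mp ha) b (Finset.mem_coe.mp hb) (by exact_mod_cast hfst)
    have hcardP2 : P.card = (P.image κ).card := (Finset.card_image_of_injOn hκinj).symm
    have hne' : (P.image κ).Nonempty := ⟨κ pq₀, Finset.mem_image_of_mem _ hPne⟩
    set c := (P.image κ).min' hne' with hc
    obtain ⟨pqc, hpqc, hcval⟩ := Finset.mem_image.mp ((P.image κ).min'_mem hne')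
    rw [← hc] at hcval
    set X := (((m₀ + m₁ : ℕ) : ℤ) - 2) / d with hX
    have hImSub : P.image κ ⊆ Finset.Icc c (c + X) := by
      intro k hkmem
      obtain ⟨pq, hpq, rfl⟩ := Finset.mem_image.mp hkmem
      rw [Finset.mem_Icc]
      refine ⟨Finset.min'_le _ _ (Finset.mem_image_of_mem _ hpq), ?_⟩
      have h1 := hκval pq hpq
      have h2 := hκval pqc hpqc
      have key1 : (pq.1:ℤ) - pqc.1 = (κ pq - c) * d₀ := by
        rw [← hcval]; linear_combination h1.1 - h2.1
      have key2 : (pq.2:ℤ) - pqc.2 = (κ pq - c) * d₁ := by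
        rw [← hcval]; linear_combination h1.2 - h2.2
      have hnn : (0:ℤ) ≤ κ pq - c := by
        have := Finset.min'_le _ _ (Finset.mem_image_of_mem κ hpq)
        rw [← hc] at this
        linarith
      have hb1 := (hPmem pq).mp hpq
      have hb2 := (hPmem pqc).mp hpqc
      have habs1 : |(pq.1:ℤ) - pqc.1| ≤ (m₀:ℤ) - 1 := by
        rw [abs_le]; have := hb1.1; have := hb2.1; omega
      have habs2 : |(pq.2:ℤ) - pqc.2| ≤ (m₁:ℤ) - 1 := by
        rw [abs_le]; have := hb1.2.1; have := hb2.2.1; omega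
      have habs : (κ pq - c) * (d:ℤ) ≤ ((m₀ + m₁ : ℕ) : ℤ) - 2 := by
        calc (κ pq - c) * (d:ℤ) = (κ pq - c) * |d₀| + (κ pq - c) * |d₁| := by
              rw [hdeq]; ring
          _ = |(κ pq - c) * d₀| + |(κ pq - c) * d₁| := by
              rw [abs_mul, abs_mul, abs_of_nonneg hnn]
          _ = |(pq.1:ℤ) - pqc.1| + |(pq.2:ℤ) - pqc.2| := by rw [key1, key2]
          _ ≤ ((m₀ + m₁ : ℕ) : ℤ) - 2 := by push_cast; push_cast at habs1 habs2; linarith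
      have : κ pq - c ≤ X := by
        rw [hX]
        exact (Int.le_ediv_iff_mul_le hdZ).mpr habs
      linarith
    have hXnn : (0:ℤ) ≤ X := hednn
    have hIcc : ((P.image κ).card : ℤ) ≤ X + 1 := by
      have h5 := Finset.card_le_card hImSub
      have h6 : (Finset.Icc c (c + X)).card = (X + 1).toNat := by
        rw [Int.card_Icc]
        congr 1
        ring
      have h7 : ((X + 1).toNat : ℤ) = X + 1 := Int.toNat_of_nonneg (by linarith)
      have h8 : ((P.image κ).card : ℤ) ≤ ((X + 1).toNat : ℤ) := by exact_mod_cast h6 ▸ h5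
      rw [h7] at h8
      exact h8
    have hfinal : ((S₀ ∩ S₁).card : ℤ) ≤ (P.image κ).card := by
      exact_mod_cast hcardP2 ▸ hcardP
    linarith
end

section
/- Let N be prime, Z ≥ 1 with Z ≤ N−1, and let P = (A,B,C,D) with A,C ∈ {0,...,N−1} and B,D ∈ {1,...,N−1}. For i ∈ {0,...,Z·N − 1}, define r = ⌊i/Z⌋, j = (A + r·B) mod N, j' = (i + C + r·D) mod Z. Then the map i ↦ (j, j') is injective on {0,...,Z·N−1}; i.e., it is a bijection onto {0,...,N−1} × {0,...,Z−1}. -/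
/-- large-object SOPI: `N` prime, `1 ≤ Z ≤ N−1`, SOPI
`P = (A, B, C, Dp)` with `A, C ∈ {0,...,N−1}` and `B, Dp ∈ {1,...,N−1}`.
For `i ∈ {0,...,Z·N−1}` set `r = ⌊i/Z⌋`, `j = (A + r·B) mod N`,
`j' = (i + C + r·Dp) mod Z`.  Then `i ↦ (j, j')` is injective on
`{0,...,Z·N−1}` and is a bijection onto `{0,...,N−1} × {0,...,Z−1}`. -/
theorem large_object_sopi_bijective (N Z : ℕ) (hN : N.Prime)
    (hZ : 1 ≤ Z) (hZN : Z ≤ N - 1)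
    (A C : ℕ) (hA : A < N) (hC : C < N)
    (B Dp : ℕ) (hB : 1 ≤ B ∧ B < N) (hDp : 1 ≤ Dp ∧ Dp < N) :
    (∀ i₁ < Z * N, ∀ i₂ < Z * N,
      ((A + (i₁ / Z) * B) % N, (i₁ + C + (i₁ / Z) * Dp) % Z) =
        ((A + (i₂ / Z) * B) % N, (i₂ + C + (i₂ / Z) * Dp) % Z) → i₁ = i₂) ∧
    (Finset.range (Z * N)).image
        (fun i => ((A + (i / Z) * B) % N, (i + C + (i / Z) * Dp) % Z)) =
      Finset.range N ×ˢ Finset.range Z := by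
  obtain ⟨hB1, hB2⟩ := hB
  have hN0 : 0 < N := hN.pos
  have hZ0 : 0 < Z := hZ
  have hcop : Nat.gcd N B = 1 := by
    have : Nat.Coprime N B := (Nat.Prime.coprime_iff_not_dvd hN).mpr
      (fun h => by have := Nat.le_of_dvd hB1 h; omega)
    exact this
  have hinj : ∀ i₁ < Z * N, ∀ i₂ < Z * N,
      ((A + (i₁ / Z) * B) % N, (i₁ + C + (i₁ / Z) * Dp) % Z) =
        ((A + (i₂ / Z) * B) % N, (i₂ + C + (i₂ / Z) * Dp) % Z) → i₁ = i₂ := by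
    intro i₁ h₁ i₂ h₂ h
    simp only [Prod.mk.injEq] at h
    obtain ⟨hj, hj'⟩ := h
    have hr₁ : i₁ / Z < N := Nat.div_lt_of_lt_mul h₁
    have hr₂ : i₂ / Z < N := Nat.div_lt_of_lt_mul h₂
    have hmod : (A + (i₁ / Z) * B) ≡ (A + (i₂ / Z) * B) [MOD N] := hj
    have hmod2 : (i₁ / Z) * B ≡ (i₂ / Z) * B [MOD N] := hmod.add_left_cancel' A
    have hr : i₁ / Z ≡ i₂ / Z [MOD N] := hmod2.cancel_right_of_coprime hcop
    have hreq : i₁ / Z = i₂ / Z := by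
      have := hr.eq_of_lt_of_lt hr₁ hr₂
      exact this
    rw [hreq] at hj'
    have hmod3 : i₁ + (C + (i₂ / Z) * Dp) ≡ i₂ + (C + (i₂ / Z) * Dp) [MOD Z] := by
      have : (i₁ + C + (i₂ / Z) * Dp) ≡ (i₂ + C + (i₂ / Z) * Dp) [MOD Z] := hj'
      simpa [add_assoc] using this
    have hmodZ : i₁ % Z = i₂ % Z := hmod3.add_right_cancel' _
    rw [← Nat.div_add_mod i₁ Z, ← Nat.div_add_mod i₂ Z, hreq, hmodZ]
  refine ⟨hinj, ?_⟩
  apply Finset.eq_of_subset_of_card_le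
  · intro p hp
    simp only [Finset.mem_image, Finset.mem_range] at hp
    obtain ⟨i, hi, rfl⟩ := hp
    simp [Finset.mem_product, Nat.mod_lt _ hN0, Nat.mod_lt _ hZ0]
  · rw [Finset.card_product, Finset.card_range, Finset.card_range,
      Finset.card_image_of_injOn, Finset.card_range]
    · exact le_of_eq (mul_comm N Z)
    · intro i₁ h₁ i₂ h₂ h
      exact hinj i₁ (Finset.mem_range.mp h₁) i₂ (Finset.mem_range.mp h₂) h
end
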